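/- Let γ, τ, n, N > 0 and g as above. For every positive integer n_l ≥ 1, the function h_l(U) = U + g(U)(1/n_l + τ/γ + 1) satisfies h_l'(U) > 0 for all U ∈ (0, nN), i.e. h_l is strictly increasing on (0, nN). -/

import Mathlib

/-!
With `a = τ + 2γ`, the function `g` is `(√p(U) - aU) / (2γ)` for the quadratic
`p(U) = (a² - 4γ²)U² + 4nNγ²U`. Since `(p')² = 4(a² - 4γ²)p + (4nNγ²)²`, the slope
`(√p)' = p' / (2√p)` satisfies `((√p)')² = a² - 4γ² + (4nNγ²)² / (4p)`, which strictly decreases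
as `p` increases; hence `g'` strictly decreases on `(0, nN]`. At `U = nN` one has `√p = a nN`, so
`g'(nN) = -γ/a`. Therefore `h' = 1 + c g' > 1 - cγ/a ≥ 0`, because
`c = 1/n_l + τ/γ + 1 ≤ a/γ`.
-/

open Real Set

noncomputable def sqrtQuadDeriv (a b U : ℝ) : ℝ :=
  (2 * a * U + b) / (2 * √(a * U ^ 2 + b * U))

section SqrtQuadratic

variable {a b U : ℝ}

theorem hasDerivAt_sqrt_quadratic (hp : 0 < a * U ^ 2 + b * U) :
    HasDerivAt (fun x => √(a * x ^ 2 + b * x)) (sqrtQuadDeriv a b U) U := by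
  have hq : HasDerivAt (fun x => a * x ^ 2 + b * x) (2 * a * U + b) U :=
    (((hasDerivAt_pow 2 U).const_mul a).add ((hasDerivAt_id U).const_mul b)).congr_deriv
      (by norm_num; ring)
  exact hq.sqrt hp.ne'

theorem sqrtQuadDeriv_sq (hp : 0 < a * U ^ 2 + b * U) :
    sqrtQuadDeriv a b U ^ 2 = a + b ^ 2 / (4 * (a * U ^ 2 + b * U)) := by
  rw [sqrtQuadDeriv, div_pow, mul_pow, sq_sqrt hp.le, add_div' _ _ _ (by positivity)]
  congr 1 <;> ring

theorem sqrtQuadDeriv_pos (ha : 0 ≤ a) (hb : 0 < b) (hU : 0 < U) : 0 < sqrtQuadDeriv a b U := by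
  unfold sqrtQuadDeriv
  positivity

theorem sqrtQuadDeriv_strictAntiOn (ha : 0 ≤ a) (hb : 0 < b) :
    StrictAntiOn (sqrtQuadDeriv a b) (Ioi 0) := by
  intro U (hU : 0 < U) V (hV : 0 < V) hUV
  have hpU : 0 < a * U ^ 2 + b * U := by positivity
  have hpUV : a * U ^ 2 + b * U < a * V ^ 2 + b * V := by
    nlinarith [mul_nonneg ha (by nlinarith : 0 ≤ V ^ 2 - U ^ 2), mul_pos hb (sub_pos.mpr hUV)]
  refine (pow_lt_pow_iff_left₀ (sqrtQuadDeriv_pos ha hb hV).le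
    (sqrtQuadDeriv_pos ha hb hU).le two_ne_zero).mp ?_
  rw [sqrtQuadDeriv_sq hpU, sqrtQuadDeriv_sq (hpU.trans hpUV)]
  gcongr

end SqrtQuadratic

noncomputable def root (γ τ M U : ℝ) : ℝ :=
  1 / (2 * γ) * (-(U * (τ + 2 * γ)) + √((τ ^ 2 + 4 * γ * τ) * U ^ 2 + 4 * M * γ ^ 2 * U))

noncomputable def rootDeriv (γ τ M U : ℝ) : ℝ :=
  1 / (2 * γ) * (-(τ + 2 * γ) + sqrtQuadDeriv (τ ^ 2 + 4 * γ * τ) (4 * M * γ ^ 2) U)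

section Root

variable {γ τ M U : ℝ}

theorem hasDerivAt_root (hγ : 0 < γ) (hτ : 0 < τ) (hM : 0 < M) (hU : 0 < U) :
    HasDerivAt (root γ τ M) (rootDeriv γ τ M U) U := by
  have hp : 0 < (τ ^ 2 + 4 * γ * τ) * U ^ 2 + 4 * M * γ ^ 2 * U := by positivity
  exact ((((hasDerivAt_id U).mul_const (τ + 2 * γ)).neg.add
    (hasDerivAt_sqrt_quadratic hp)).const_mul (1 / (2 * γ))).congr_deriv (by simp [rootDeriv])

theorem rootDeriv_self (hγ : 0 < γ) (hτ : 0 < τ) (hM : 0 < M) :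
    rootDeriv γ τ M M = -γ / (τ + 2 * γ) := by
  have hroot : √((τ ^ 2 + 4 * γ * τ) * M ^ 2 + 4 * M * γ ^ 2 * M) = (τ + 2 * γ) * M := by
    rw [← sqrt_sq (by positivity : 0 ≤ (τ + 2 * γ) * M)]
    ring_nf
  rw [rootDeriv, sqrtQuadDeriv, hroot]
  field_simp
  ring

theorem neg_div_lt_rootDeriv (hγ : 0 < γ) (hτ : 0 < τ) (hU : U ∈ Ioo 0 M) :
    -γ / (τ + 2 * γ) < rootDeriv γ τ M U := by
  obtain ⟨hU, hUM⟩ := hU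
  have hM : 0 < M := hU.trans hUM
  rw [← rootDeriv_self hγ hτ hM, rootDeriv, rootDeriv]
  gcongr
  exact sqrtQuadDeriv_strictAntiOn (by positivity) (by positivity) hU hM hUM

theorem one_add_rootDeriv_mul_pos (hγ : 0 < γ) (hτ : 0 < τ) (hU : U ∈ Ioo 0 M) {c : ℝ}
    (hc : 0 < c) (hcγ : c * γ ≤ τ + 2 * γ) : 0 < 1 + rootDeriv γ τ M U * c :=
  calc 0 ≤ 1 - c * γ / (τ + 2 * γ) := by
        rw [sub_nonneg, div_le_one (by positivity)]
        exact hcγ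
    _ = 1 + -γ / (τ + 2 * γ) * c := by ring
    _ < _ := by gcongr; exact neg_div_lt_rootDeriv hγ hτ hU

end Root

theorem h_strictly_increasing_general
    (γ τ n N : ℝ) (hγ : 0 < γ) (hτ : 0 < τ)
    (g : ℝ → ℝ)
    (hg : ∀ U, g U = (1 / (2 * γ)) *
      (-(U * (τ + 2 * γ)) + Real.sqrt (U ^ 2 * (τ ^ 2 + 4 * γ * τ) + 4 * U * n * N * γ ^ 2)))
    (nl : ℕ)
    (h : ℝ → ℝ)
    (hh : ∀ U, h U = U + g U * (1 / (nl : ℝ) + τ / γ + 1)) :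
    (∀ U ∈ Set.Ioo (0:ℝ) (n * N), 0 < deriv h U) ∧
    StrictMonoOn h (Set.Ioo (0:ℝ) (n * N)) := by
  set c := 1 / (nl : ℝ) + τ / γ + 1
  have hcγ : c * γ ≤ τ + 2 * γ := by
    have hnl : 1 / (nl : ℝ) * γ ≤ γ := by
      simpa using mul_le_mul_of_nonneg_right (Nat.cast_inv_le_one nl : (nl : ℝ)⁻¹ ≤ 1) hγ.le
    have : c * γ = 1 / (nl : ℝ) * γ + τ + γ := by
      simp only [c, add_mul, div_mul_cancel₀ τ hγ.ne', one_mul]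
    linarith
  have hg_eq : g = root γ τ (n * N) := by
    funext U
    rw [hg, root]
    ring_nf
  have hderiv : ∀ U ∈ Ioo 0 (n * N), HasDerivAt h (1 + rootDeriv γ τ (n * N) U * c) U := by
    intro U hU
    have hroot := hasDerivAt_root hγ hτ (hU.1.trans hU.2) hU.1
    rw [← hg_eq] at hroot
    exact ((hasDerivAt_id U).add (hroot.mul_const c)).congr_of_eventuallyEq
      (Filter.Eventually.of_forall hh)
  have hderiv_pos : ∀ U ∈ Ioo 0 (n * N), 0 < deriv h U := fun U hU =>
    (hderiv U hU).deriv ▸ one_add_rootDeriv_mul_pos hγ hτ hU (by positivity) hcγ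
  refine ⟨hderiv_pos, strictMonoOn_of_deriv_pos (convex_Ioo 0 (n * N)) ?_ ?_⟩
  · exact fun U hU => (hderiv U hU).continuousAt.continuousWithinAt
  · rwa [interior_Ioo]

theorem h_strictly_increasing
    (γ τ n N : ℝ) (hγ : 0 < γ) (hτ : 0 < τ) (hn : 0 < n) (hN : 0 < N)
    (g : ℝ → ℝ)
    (hg : ∀ U, g U = (1 / (2 * γ)) *
      (-(U * (τ + 2 * γ)) + Real.sqrt (U ^ 2 * (τ ^ 2 + 4 * γ * τ) + 4 * U * n * N * γ ^ 2)))
    (nl : ℕ) (hnl : 1 ≤ nl)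
    (h : ℝ → ℝ)
    (hh : ∀ U, h U = U + g U * (1 / (nl : ℝ) + τ / γ + 1)) :
    (∀ U ∈ Set.Ioo (0:ℝ) (n * N), 0 < deriv h U) ∧
    StrictMonoOn h (Set.Ioo (0:ℝ) (n * N)) :=
  h_strictly_increasing_general γ τ n N hγ hτ g hg nl h hh
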